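/- Let (Y_i)_{i≥1} be nonnegative random variables such that P(Y_i > x) = ℓ_i(x) x^{-k_i} with k_i ≥ k > k₁ > 0 for all i ≥ d+1, where the slowly varying functions satisfy the uniformity condition: for all A > 1, δ > 0 there exists x₀(A,δ) with ℓ_i(x) ≤ A x^δ for all x > x₀ and all i. Let z_i > 0 be bounded weights, l_m = ⌊m^χ⌋ with 0 < χ < (k−k₁)/(k₁(k+1)), and ε_i = 1/l_m^{η+1} with η > 0. Then for δ ∈ (0, (k−k₁)/(k+1)), ∑_{i=d+1}^{l_m} P(z_i Y_i > x ε_i) = O(x^{-k₁(1+δ)}) as x → ∞. -/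

import Mathlib

open MeasureTheory Filter Asymptotics

def SlowlyVarying (ℓ : ℝ → ℝ) : Prop :=
  ∀ lam : ℝ, 0 < lam → Tendsto (fun x => ℓ (lam * x) / ℓ x) atTop (nhds 1)

/-- for the lighter-tailed columns `i ≥ d+1` (tail indices `kᵢ ≥ k > k₁`),
with bounded positive weights, `l_m = ⌊m^χ⌋`, `εᵢ = 1/l_m^{η+1}`, and uniformly
polynomially bounded slowly varying functions,
`∑_{i=d+1}^{l_m} P(zᵢYᵢ > x·εᵢ) = O(x^{-k₁(1+δ)})` for `δ ∈ (0,(k−k₁)/(k+1))`. -/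
theorem stmt3 {Ω : Type*} [MeasurableSpace Ω] (μ : Measure Ω) [IsProbabilityMeasure μ]
    (Y : ℕ → Ω → ℝ) (hYnn : ∀ i ω, 0 ≤ Y i ω)
    (d m : ℕ) (hm : 1 ≤ m)
    (kk : ℕ → ℝ) (ℓ : ℕ → ℝ → ℝ)
    (k k₁ : ℝ) (hk₁ : 0 < k₁) (hkk₁ : k₁ < k)
    (hki : ∀ i, d + 1 ≤ i → k ≤ kk i)
    (hSV : ∀ i, d + 1 ≤ i → SlowlyVarying (ℓ i))
    (htail : ∀ i, d + 1 ≤ i → ∀ x : ℝ, 0 < x →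
      (μ {ω | x < Y i ω}).toReal = ℓ i x * x ^ (-(kk i)))
    (hunif : ∀ A : ℝ, 1 < A → ∀ δ' : ℝ, 0 < δ' → ∃ x₀ : ℝ, ∀ i, d + 1 ≤ i →
      ∀ x : ℝ, x₀ < x → ℓ i x ≤ A * x ^ δ')
    (z : ℕ → ℝ) (hz : ∀ i, 0 < z i) (Zb : ℝ) (hZb : ∀ i, z i ≤ Zb)
    (χ : ℝ) (hχ : 0 < χ) (hχ0 : χ < (k - k₁) / (k₁ * (k + 1)))
    (η : ℝ) (hη : 0 < η)
    (lm : ℕ) (hlm : lm = ⌊(m : ℝ) ^ χ⌋₊)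
    (δ : ℝ) (hδ : 0 < δ) (hδk : δ < (k - k₁) / (k + 1)) :
    (fun x : ℝ => ∑ i ∈ Finset.Icc (d + 1) lm,
        (μ {ω | x * ((1 : ℝ) / (lm : ℝ) ^ (η + 1)) < z i * Y i ω}).toReal)
      =O[atTop] fun x : ℝ => x ^ (-(k₁ * (1 + δ))) := by
  have hk1pos : (0:ℝ) < k + 1 := by linarith
  have h1 : δ * (k + 1) < k - k₁ := (lt_div_iff₀ hk1pos).mp hδk
  set κ := k₁ * (1 + δ) with hκdef
  have hκpos : 0 < κ := by positivity
  have hκk : κ < k := by nlinarith [mul_pos hδ (show (0:ℝ) < k + 1 - k₁ by linarith)]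
  have hδ'pos : 0 < (k - κ) / 2 := by linarith
  set δ' := (k - κ) / 2 with hδ'def
  obtain ⟨x₀, hx₀⟩ := hunif 2 one_lt_two δ' hδ'pos
  apply Asymptotics.IsBigO.fun_sum
  intro i hi
  obtain ⟨hid, hilm⟩ := Finset.mem_Icc.mp hi
  have hlmpos : 0 < lm := lt_of_lt_of_le (Nat.succ_pos d) (le_trans hid hilm)
  have hlmR : (0:ℝ) < (lm:ℝ) := by exact_mod_cast hlmpos
  set ε : ℝ := (1:ℝ) / (lm:ℝ) ^ (η + 1) with hεdef
  have hεpos : 0 < ε := by positivity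
  set c : ℝ := ε / z i with hcdef
  have hcpos : 0 < c := div_pos hεpos (hz i)
  have hset : ∀ x : ℝ, {ω | x * ε < z i * Y i ω} = {ω | c * x < Y i ω} := by
    intro x
    ext ω
    simp only [Set.mem_setOf_eq, hcdef, div_mul_eq_mul_div, div_lt_iff₀ (hz i),
      mul_comm ε x]
    rw [mul_comm (Y i ω) (z i)]
  rw [isBigO_iff]
  refine ⟨2 * c ^ (δ' - k), ?_⟩
  filter_upwards [eventually_ge_atTop (max ((x₀ + 1) / c) (max (1 / c) 1))] with x hx
  have hx1 : (1:ℝ) ≤ x := le_trans (le_trans (le_max_right _ _) (le_max_right _ _)) hx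
  have hxpos : (0:ℝ) < x := lt_of_lt_of_le one_pos hx1
  have hcx0 : x₀ < c * x := by
    have : (x₀ + 1) / c ≤ x := le_trans (le_max_left _ _) hx
    have := (div_le_iff₀ hcpos).mp this
    nlinarith
  have hcxpos : 0 < c * x := mul_pos hcpos hxpos
  have hcx1 : (1:ℝ) ≤ c * x := by
    have h1c : 1 / c ≤ x := le_trans (le_trans (le_max_left _ _) (le_max_right _ _)) hx
    have := (div_le_iff₀ hcpos).mp h1c
    linarith [this, mul_comm x c]
  have hterm : (μ {ω | x * ε < z i * Y i ω}).toReal = ℓ i (c * x) * (c * x) ^ (-(kk i)) := by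
    rw [hset x, htail i hid (c * x) hcxpos]
  have hℓb : ℓ i (c * x) ≤ 2 * (c * x) ^ δ' := hx₀ i hid _ hcx0
  have hkle : -(kk i) ≤ -k := neg_le_neg (hki i hid)
  have hb1 : ℓ i (c * x) * (c * x) ^ (-(kk i)) ≤ 2 * (c * x) ^ δ' * (c * x) ^ (-(kk i)) :=
    mul_le_mul_of_nonneg_right hℓb (Real.rpow_nonneg hcxpos.le _)
  have hb2 : 2 * (c * x) ^ δ' * (c * x) ^ (-(kk i)) = 2 * (c * x) ^ (δ' + -(kk i)) := by
    rw [mul_assoc, ← Real.rpow_add hcxpos]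
  have hb3 : (c * x) ^ (δ' + -(kk i)) ≤ (c * x) ^ (δ' - k) :=
    Real.rpow_le_rpow_of_exponent_le hcx1 (by linarith)
  have hb4 : (c * x) ^ (δ' - k) = c ^ (δ' - k) * x ^ (δ' - k) :=
    Real.mul_rpow hcpos.le hxpos.le
  have hb5 : x ^ (δ' - k) ≤ x ^ (-κ) :=
    Real.rpow_le_rpow_of_exponent_le hx1 (by rw [hδ'def]; linarith)
  rw [hterm, Real.norm_eq_abs, Real.norm_eq_abs,
    abs_of_nonneg (by positivity : (0:ℝ) ≤ x ^ (-κ)), abs_of_nonneg]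
  · calc ℓ i (c * x) * (c * x) ^ (-(kk i))
        ≤ 2 * (c * x) ^ (δ' + -(kk i)) := by rw [← hb2]; exact hb1
      _ ≤ 2 * (c ^ (δ' - k) * x ^ (δ' - k)) := by
          rw [← hb4]; exact mul_le_mul_of_nonneg_left hb3 (by norm_num)
      _ ≤ 2 * (c ^ (δ' - k) * x ^ (-κ)) := by
          have := mul_le_mul_of_nonneg_left hb5 (Real.rpow_nonneg hcpos.le (δ' - k))
          nlinarith
      _ = 2 * c ^ (δ' - k) * x ^ (-κ) := by ring
  · rw [← hterm]; exact ENNReal.toReal_nonneg
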